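/- Let n, N be positive integers, let α^1, …, α^n, β be Hermitian N×N complex matrices with (α^j)² = β² = I, α^j α^k + α^k α^j = 0 for j ≠ k, and α^j β + β α^j = 0, let m > 0, ω > 0, k > 0, let f(s) = |s|^{k−1} s (so F(s) = |s|^{k+1}/(k+1) ≥ 0), and let φ: ℝ^n → ℂ^N be a Schwartz solution, not identically zero, of the stationary Soler equation ω φ = −i Σ_{j=1}^n α^j ∂_j φ + m β φ − f(⟨φ, βφ⟩) βφ. Then E(φ) > 0. -/

import Mathlib

open Matrix MeasureTheory

/-- The Hermitian inner product on `ℂ^N`, conjugate-linear in the first argument. -/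
noncomputable def cInner {N : ℕ} (v w : Fin N → ℂ) : ℂ := ∑ i, (starRingEnd ℂ) (v i) * w i

/-- The charge `Q(φ) = ∫ |φ(x)|² dx`. -/
noncomputable def Qfun {n N : ℕ} (φ : (Fin n → ℝ) → (Fin N → ℂ)) : ℝ :=
  ∫ x, ∑ i, Complex.normSq (φ x i)

/-- The kinetic functional `K(φ) = ∫ ⟨φ(x), −i Σ_j α^j ∂_j φ(x)⟩ dx`. -/
noncomputable def Kfun {n N : ℕ} (α : Fin n → Matrix (Fin N) (Fin N) ℂ)
    (φ : (Fin n → ℝ) → (Fin N → ℂ)) : ℂ :=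
  ∫ x, cInner (φ x) ((-Complex.I) • ∑ j, (α j).mulVec (fderiv ℝ φ x (Pi.single j 1)))

/-- The mass term `M(φ) = m ∫ ⟨φ(x), β φ(x)⟩ dx`. -/
noncomputable def Mfun {n N : ℕ} (β : Matrix (Fin N) (Fin N) ℂ) (m : ℝ)
    (φ : (Fin n → ℝ) → (Fin N → ℂ)) : ℂ :=
  (m : ℂ) * ∫ x, cInner (φ x) (β.mulVec (φ x))

/-- The potential term of the Soler model, `V(φ) = −∫ F(⟨φ(x), βφ(x)⟩) dx`. -/
noncomputable def Vsol {n N : ℕ} (β : Matrix (Fin N) (Fin N) ℂ) (F : ℝ → ℝ)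
    (φ : (Fin n → ℝ) → (Fin N → ℂ)) : ℝ :=
  - ∫ x, F ((cInner (φ x) (β.mulVec (φ x))).re)

/-- The energy of the Soler model, `E(φ) = K(φ) + M(φ) + V(φ)`. -/
noncomputable def Esol {n N : ℕ} (α : Fin n → Matrix (Fin N) (Fin N) ℂ)
    (β : Matrix (Fin N) (Fin N) ℂ) (m : ℝ) (F : ℝ → ℝ)
    (φ : (Fin n → ℝ) → (Fin N → ℂ)) : ℂ :=
  Kfun α φ + Mfun β m φ + (Vsol β F φ : ℝ)

/-- The stationary Soler equation
`ω φ = −i Σ_j α^j ∂_j φ + m β φ − f(⟨φ, βφ⟩) βφ` (pointwise in `x`). -/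
def IsSolerSolution {n N : ℕ} (α : Fin n → Matrix (Fin N) (Fin N) ℂ)
    (β : Matrix (Fin N) (Fin N) ℂ) (m ω : ℝ) (f : ℝ → ℝ)
    (φ : (Fin n → ℝ) → (Fin N → ℂ)) : Prop :=
  ∀ x, (ω : ℂ) • φ x =
    (-Complex.I) • (∑ j, (α j).mulVec (fderiv ℝ φ x (Pi.single j 1)))
      + (m : ℂ) • β.mulVec (φ x)
      - ((f ((cInner (φ x) (β.mulVec (φ x))).re) : ℝ) : ℂ) • β.mulVec (φ x)

lemma cInner_add_right {N : ℕ} (v w u : Fin N → ℂ) : cInner v (w + u) = cInner v w + cInner v u := by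
  simp [cInner, mul_add, Finset.sum_add_distrib]

lemma cInner_sub_right {N : ℕ} (v w u : Fin N → ℂ) : cInner v (w - u) = cInner v w - cInner v u := by
  simp [cInner, mul_sub, Finset.sum_sub_distrib]

lemma cInner_smul_right {N : ℕ} (v w : Fin N → ℂ) (a : ℂ) : cInner v (a • w) = a * cInner v w := by
  simp only [cInner, Pi.smul_apply, smul_eq_mul, Finset.mul_sum]
  exact Finset.sum_congr rfl fun i _ => by ring

lemma cInner_self {N : ℕ} (v : Fin N → ℂ) :
    cInner v v = ((∑ i, Complex.normSq (v i) : ℝ) : ℂ) := by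
  simp only [cInner, Complex.ofReal_sum]
  exact Finset.sum_congr rfl fun i _ => (Complex.normSq_eq_conj_mul_self).symm

lemma cInner_beta_conj {N : ℕ} (β : Matrix (Fin N) (Fin N) ℂ) (hβ : β.IsHermitian)
    (v : Fin N → ℂ) :
    (starRingEnd ℂ) (cInner v (β.mulVec v)) = cInner v (β.mulVec v) := by
  nth_rewrite 2 [← hβ.eq]
  simp only [cInner, map_sum, _root_.map_mul, Complex.conj_conj, Matrix.mulVec, dotProduct,
    Matrix.conjTranspose_apply, Finset.mul_sum, starRingEnd_apply]
  rw [Finset.sum_comm]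
  exact Finset.sum_congr rfl fun i _ => Finset.sum_congr rfl fun j _ => by rw [star_star]; ring

lemma cInner_beta_real {N : ℕ} (β : Matrix (Fin N) (Fin N) ℂ) (hβ : β.IsHermitian)
    (v : Fin N → ℂ) :
    cInner v (β.mulVec v) = (((cInner v (β.mulVec v)).re : ℝ) : ℂ) :=
  (Complex.conj_eq_iff_re.mp (cInner_beta_conj β hβ v)).symm

lemma cInner_beta_bound {N : ℕ} (β : Matrix (Fin N) (Fin N) ℂ) (v : Fin N → ℂ) :
    ‖cInner v (β.mulVec v)‖ ≤ (∑ i, ∑ j, ‖β i j‖) * (‖v‖ * ‖v‖) := by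
  simp only [cInner, Matrix.mulVec, dotProduct]
  refine (norm_sum_le _ _).trans ?_
  have h1 : ∀ i : Fin N, ‖(starRingEnd ℂ) (v i) * ∑ j, β i j * v j‖
      ≤ (∑ j, ‖β i j‖) * (‖v‖ * ‖v‖) := by
    intro i
    rw [norm_mul, RCLike.norm_conj]
    have h2 : ‖∑ j, β i j * v j‖ ≤ ∑ j, ‖β i j‖ * ‖v‖ :=
      (norm_sum_le _ _).trans (Finset.sum_le_sum fun j _ => by
        rw [norm_mul]; exact mul_le_mul_of_nonneg_left (norm_le_pi_norm v j) (norm_nonneg _))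
    calc ‖v i‖ * ‖∑ j, β i j * v j‖ ≤ ‖v‖ * ∑ j, ‖β i j‖ * ‖v‖ :=
          mul_le_mul (norm_le_pi_norm v i) h2 (norm_nonneg _) (norm_nonneg _)
      _ = (∑ j, ‖β i j‖) * (‖v‖ * ‖v‖) := by
          rw [Finset.mul_sum, Finset.sum_mul]
          exact Finset.sum_congr rfl fun j _ => by ring
  refine (Finset.sum_le_sum fun i _ => h1 i).trans (le_of_eq (Finset.sum_mul _ _ _).symm)

section Main
variable {n N : ℕ}
  (α : Fin n → Matrix (Fin N) (Fin N) ℂ) (β : Matrix (Fin N) (Fin N) ℂ)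

theorem stmt_16' (hN : 0 < N)
    (hβ : β.IsHermitian)
    (m : ℝ) (hm : 0 < m) (ω : ℝ) (hω : 0 < ω) (k : ℝ) (hk : 0 < k)
    (f : ℝ → ℝ) (hf : ∀ s, f s = |s| ^ (k - 1) * s)
    (F : ℝ → ℝ) (hF : ∀ s, F s = |s| ^ (k + 1) / (k + 1))
    (φ : SchwartzMap (Fin n → ℝ) (Fin N → ℂ))
    (hne : ∃ x, φ x ≠ 0)
    (hsol : ∀ x, (ω : ℂ) • φ x =
      (-Complex.I) • (∑ j, (α j).mulVec (fderiv ℝ ⇑φ x (Pi.single j 1)))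
        + (m : ℂ) • β.mulVec (φ x)
        - ((f ((cInner (φ x) (β.mulVec (φ x))).re) : ℝ) : ℂ) • β.mulVec (φ x)) :
    ∃ r : ℝ, (Kfun α ⇑φ + Mfun β m ⇑φ + ((Vsol β F ⇑φ : ℝ) : ℂ)) = (r : ℂ) ∧ 0 < r := by
  classical
  set s : (Fin n → ℝ) → ℝ := fun x => (cInner (φ x) (β.mulVec (φ x))).re with hs_def
  set qr : (Fin n → ℝ) → ℝ := fun x => ∑ i, Complex.normSq (φ x i) with hqr_def
  set P : (Fin n → ℝ) → ℝ := fun x => |s x| ^ (k + 1) with hP_def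
  set B : ℝ := ∑ i, ∑ j, ‖β i j‖ with hB_def
  have hB0 : 0 ≤ B := Finset.sum_nonneg fun i _ => Finset.sum_nonneg fun j _ => norm_nonneg _
  -- bound on φ
  obtain ⟨C, hCpos, hC⟩ := φ.decay 0 0
  simp only [pow_zero, norm_iteratedFDeriv_zero, one_mul] at hC
  have hC0 : 0 ≤ C := le_of_lt hCpos
  -- continuity
  have hφc : Continuous ⇑φ := φ.continuous
  have hc_cont : Continuous fun x => cInner (φ x) (β.mulVec (φ x)) := by
    simp only [cInner, Matrix.mulVec, dotProduct]
    exact continuous_finset_sum _ fun i _ =>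
      ((Complex.continuous_conj.comp ((continuous_apply i).comp hφc)).mul
        (continuous_finset_sum _ fun j _ => continuous_const.mul ((continuous_apply j).comp hφc)))
  have hs_cont : Continuous s := Complex.continuous_re.comp hc_cont
  have hqr_cont : Continuous qr :=
    continuous_finset_sum _ fun i _ => Complex.continuous_normSq.comp ((continuous_apply i).comp hφc)
  have hP_cont : Continuous P :=
    (hs_cont.abs).rpow_const fun x => Or.inr (by linarith)
  -- bounds
  have hs_bd : ∀ x, |s x| ≤ B * (‖φ x‖ * ‖φ x‖) := fun x =>
    (Complex.abs_re_le_norm _).trans (cInner_beta_bound β (φ x))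
  have hs_bd1 : ∀ x, |s x| ≤ B * C * ‖φ x‖ := by
    intro x
    refine (hs_bd x).trans ?_
    have h1 : ‖φ x‖ * ‖φ x‖ ≤ C * ‖φ x‖ := mul_le_mul_of_nonneg_right (hC x) (norm_nonneg _)
    calc B * (‖φ x‖ * ‖φ x‖) ≤ B * (C * ‖φ x‖) := mul_le_mul_of_nonneg_left h1 hB0
      _ = B * C * ‖φ x‖ := (mul_assoc _ _ _).symm
  have hs_bd2 : ∀ x, |s x| ≤ B * C * C := fun x =>
    (hs_bd1 x).trans (mul_le_mul_of_nonneg_left (hC x) (mul_nonneg hB0 hC0))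
  have hqr_nonneg : ∀ x, 0 ≤ qr x := fun x => Finset.sum_nonneg fun i _ => Complex.normSq_nonneg _
  have hqr_bd : ∀ x, qr x ≤ (N : ℝ) * C * ‖φ x‖ := by
    intro x
    have h1 : ∀ i : Fin N, Complex.normSq (φ x i) ≤ C * ‖φ x‖ := by
      intro i
      rw [Complex.normSq_eq_norm_sq]
      have h2 : ‖φ x i‖ = ‖φ x i‖ := rfl
      have h3 : ‖φ x i‖ ≤ ‖φ x‖ := norm_le_pi_norm (φ x) i
      have := hC x; have := norm_nonneg (φ x i)
      rw [h2]; nlinarith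
    calc qr x ≤ ∑ _i : Fin N, C * ‖φ x‖ := Finset.sum_le_sum fun i _ => h1 i
      _ = (N : ℝ) * C * ‖φ x‖ := by
        rw [Finset.sum_const, Finset.card_univ, Fintype.card_fin, nsmul_eq_mul]; ring
  have hP_nonneg : ∀ x, 0 ≤ P x := fun x => Real.rpow_nonneg (abs_nonneg _) _
  have hP_bd : ∀ x, P x ≤ (B * C * C) ^ k * (B * C * ‖φ x‖) := by
    intro x
    rcases eq_or_ne (s x) 0 with h | h
    · have : P x = 0 := by
        simp only [hP_def, h, abs_zero]
        exact Real.zero_rpow (by linarith)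
      rw [this]
      have h0 : (0:ℝ) ≤ (B * C * C) ^ k :=
        Real.rpow_nonneg (mul_nonneg (mul_nonneg hB0 hC0) hC0) _
      have h1 : 0 ≤ B * C * ‖φ x‖ := le_trans (abs_nonneg _) (hs_bd1 x)
      exact mul_nonneg h0 h1
    · have habs : 0 < |s x| := abs_pos.mpr h
      have : P x = |s x| ^ k * |s x| := by
        simp only [hP_def]
        rw [Real.rpow_add_one (ne_of_gt habs)]
      rw [this]
      have h1 : |s x| ^ k ≤ (B * C * C) ^ k :=
        Real.rpow_le_rpow (abs_nonneg _) (hs_bd2 x) (le_of_lt hk)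
      have h2 : |s x| ≤ B * C * ‖φ x‖ := hs_bd1 x
      have h3 : (0:ℝ) ≤ |s x| ^ k := Real.rpow_nonneg (abs_nonneg _) _
      nlinarith [abs_nonneg (s x)]
  -- integrability
  have hφint : Integrable (⇑φ) := φ.integrable
  have hnint : Integrable fun x => ‖φ x‖ := hφint.norm
  have hs_int : Integrable s := by
    refine Integrable.mono' (hnint.const_mul (B * C)) hs_cont.aestronglyMeasurable
      (Filter.Eventually.of_forall fun x => ?_)
    rw [Real.norm_eq_abs]; exact hs_bd1 x
  have hqr_int : Integrable qr := by
    refine Integrable.mono' (hnint.const_mul ((N : ℝ) * C)) hqr_cont.aestronglyMeasurable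
      (Filter.Eventually.of_forall fun x => ?_)
    rw [Real.norm_eq_abs, abs_of_nonneg (hqr_nonneg x)]; exact hqr_bd x
  have hP_int : Integrable P := by
    refine Integrable.mono' (hnint.const_mul ((B * C * C) ^ k * (B * C)))
      hP_cont.aestronglyMeasurable (Filter.Eventually.of_forall fun x => ?_)
    rw [Real.norm_eq_abs, abs_of_nonneg (hP_nonneg x), mul_assoc]
    exact hP_bd x
  -- power identity
  have hfs : ∀ t : ℝ, (|t| ^ (k - 1) * t) * t = |t| ^ (k + 1) := by
    intro t
    rcases eq_or_ne t 0 with h | h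
    · rw [h, abs_zero, Real.zero_rpow (by linarith : k + 1 ≠ 0)]; ring
    · have ht : 0 < |t| := abs_pos.mpr h
      have h2 : t * t = |t| ^ (2:ℝ) := by
        rw [Real.rpow_two, sq_abs, sq]
      calc |t| ^ (k - 1) * t * t = |t| ^ (k - 1) * |t| ^ (2:ℝ) := by rw [mul_assoc, h2]
        _ = |t| ^ (k - 1 + 2) := (Real.rpow_add ht _ _).symm
        _ = |t| ^ (k + 1) := by congr 1; ring
  -- pointwise identity for K integrand
  have hKpt : ∀ x, cInner (φ x)
      ((-Complex.I) • ∑ j, (α j).mulVec (fderiv ℝ ⇑φ x (Pi.single j 1)))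
      = ((ω * qr x - m * s x + P x : ℝ) : ℂ) := by
    intro x
    have h := hsol x
    have h2 : (-Complex.I) • (∑ j, (α j).mulVec (fderiv ℝ ⇑φ x (Pi.single j 1)))
        = (ω : ℂ) • φ x - (m : ℂ) • β.mulVec (φ x)
          + ((f (s x) : ℝ) : ℂ) • β.mulVec (φ x) := by
      rw [h]; abel
    rw [h2, cInner_add_right, cInner_sub_right, cInner_smul_right, cInner_smul_right,
      cInner_smul_right, cInner_self, cInner_beta_real β hβ]
    have hfsx : f (s x) * s x = P x := by rw [hf]; exact hfs (s x)
    rw [show ((cInner (φ x) (β.mulVec (φ x))).re) = s x from rfl,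
        show (∑ i, Complex.normSq (φ x i)) = qr x from rfl, ← hfsx]
    push_cast
    ring
  -- K, M, V
  have hK : Kfun α ⇑φ = (((∫ x, (ω * qr x - m * s x + P x) : ℝ)) : ℂ) := by
    unfold Kfun
    rw [show (fun x => cInner (φ x)
        ((-Complex.I) • ∑ j, (α j).mulVec (fderiv ℝ ⇑φ x (Pi.single j 1))))
      = fun x => ((ω * qr x - m * s x + P x : ℝ) : ℂ) from funext hKpt]
    exact integral_ofReal
  have hM : Mfun β m ⇑φ = (((m * ∫ x, s x : ℝ)) : ℂ) := by
    unfold Mfun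
    rw [show (fun x => cInner (φ x) (β.mulVec (φ x))) = fun x => ((s x : ℝ) : ℂ) from
      funext fun x => cInner_beta_real β hβ (φ x)]
    rw [show (∫ x, ((s x : ℝ) : ℂ)) = (((∫ x, s x : ℝ)) : ℂ) from integral_ofReal]
    exact (Complex.ofReal_mul m _).symm
  have hV : Vsol β F ⇑φ = -((∫ x, P x) / (k + 1)) := by
    unfold Vsol
    rw [show (fun x => F ((cInner (φ x) (β.mulVec (φ x))).re)) = fun x => P x / (k + 1) from
      funext fun x => by rw [hF]]
    rw [integral_div]
  -- split integral
  have hintw : Integrable (fun x => ω * qr x) := hqr_int.const_mul ω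
  have hintm : Integrable (fun x => m * s x) := hs_int.const_mul m
  have hint12 : Integrable (fun x => ω * qr x - m * s x) := hintw.sub hintm
  have hsplit : (∫ x, (ω * qr x - m * s x + P x) : ℝ)
      = ω * (∫ x, qr x) - m * (∫ x, s x) + (∫ x, P x) := by
    rw [integral_add hint12 hP_int, integral_sub hintw hintm,
      integral_const_mul, integral_const_mul]
  -- positivity of charge
  obtain ⟨x0, hx0⟩ := hne
  have hqr0 : 0 < qr x0 := by
    obtain ⟨i, hi⟩ := Function.ne_iff.mp hx0
    exact Finset.sum_pos' (fun i _ => Complex.normSq_nonneg _)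
      ⟨i, Finset.mem_univ i, Complex.normSq_pos.mpr hi⟩
  have hQpos : 0 < ∫ x, qr x := by
    rw [integral_pos_iff_support_of_nonneg_ae (Filter.Eventually.of_forall hqr_nonneg) hqr_int]
    have hU : IsOpen (qr ⁻¹' Set.Ioi 0) := isOpen_Ioi.preimage hqr_cont
    refine lt_of_lt_of_le (hU.measure_pos volume ⟨x0, hqr0⟩) (measure_mono ?_)
    intro x hx
    exact ne_of_gt hx
  have hPint_nonneg : 0 ≤ ∫ x, P x := integral_nonneg hP_nonneg
  refine ⟨ω * (∫ x, qr x) + (k / (k + 1)) * (∫ x, P x), ?_, ?_⟩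
  · rw [hK, hM, hV, hsplit, ← Complex.ofReal_add, ← Complex.ofReal_add, Complex.ofReal_inj]
    have hk1 : k + 1 ≠ 0 := by linarith
    field_simp
    ring
  · have h1 : 0 < ω * (∫ x, qr x) := mul_pos hω hQpos
    have h2 : 0 ≤ (k / (k + 1)) * (∫ x, P x) :=
      mul_nonneg (div_nonneg (le_of_lt hk) (by linarith)) hPint_nonneg
    linarith

end Main

/-- in the pure-power Soler (generalized Gross–Neveu) model, with
`f(s) = |s|^{k−1} s`, `F(s) = |s|^{k+1}/(k+1)`, `ω > 0`, `k > 0`, every nonzero Schwartz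
solution `φ` of the stationary Soler equation has positive energy: `E(φ) > 0`. -/
theorem stmt_16 {n N : ℕ} (hn : 0 < n) (hN : 0 < N)
    (α : Fin n → Matrix (Fin N) (Fin N) ℂ) (β : Matrix (Fin N) (Fin N) ℂ)
    (hα : ∀ j, (α j).IsHermitian) (hβ : β.IsHermitian)
    (hα2 : ∀ j, α j * α j = 1) (hβ2 : β * β = 1)
    (hanti : ∀ j k, j ≠ k → α j * α k + α k * α j = 0)
    (hαβ : ∀ j, α j * β + β * α j = 0)
    (m : ℝ) (hm : 0 < m) (ω : ℝ) (hω : 0 < ω) (k : ℝ) (hk : 0 < k)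
    (f : ℝ → ℝ) (hf : ∀ s, f s = |s| ^ (k - 1) * s)
    (F : ℝ → ℝ) (hF : ∀ s, F s = |s| ^ (k + 1) / (k + 1))
    (φ : SchwartzMap (Fin n → ℝ) (Fin N → ℂ))
    (hne : ∃ x, φ x ≠ 0)
    (hsol : IsSolerSolution α β m ω f ⇑φ) :
    ∃ r : ℝ, Esol α β m F ⇑φ = (r : ℂ) ∧ 0 < r := by
  have := stmt_16' α β hN hβ m hm ω hω k hk f hf F hF φ hne hsol
  exact this
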